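/- arXiv:2409.00350 — 2 statements merged into one kernel-verified Lean document; each statement's English description precedes it below -/
import Mathlib

section
/- For every tree G, the lower monitoring arc-geodetic number of G equals the number of vertices of degree 1 in G. -/
namespace MAG

variable {V : Type*}

/-- Directed walk from `x` to `y` whose list of visited vertices is `l`. -/
inductive DWalk (A : V → V → Prop) : V → V → List V → Prop
  | nil (v : V) : DWalk A v v [v]
  | cons {u v w : V} {l : List V} (h : A u v) (p : DWalk A v w l) :
      DWalk A u w (u :: l)

/-- The arc `(a, b)` lies on the walk with vertex list `l`. -/
def ArcOn (a b : V) (l : List V) : Prop :=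
  ∃ l₁ l₂ : List V, l = l₁ ++ a :: b :: l₂

/-- `l` is (the vertex list of) a shortest directed walk from `x` to `y`. -/
def IsShortest (A : V → V → Prop) (x y : V) (l : List V) : Prop :=
  DWalk A x y l ∧ ∀ l' : List V, DWalk A x y l' → l.length ≤ l'.length

/-- `x` and `y` monitor the arc `(a, b)`: the arc lies on every shortest
directed path from `x` to `y` (and such a path exists), or symmetrically
from `y` to `x`. -/
def Monitors (A : V → V → Prop) (x y a b : V) : Prop :=
  ((∃ l, IsShortest A x y l) ∧ ∀ l, IsShortest A x y l → ArcOn a b l) ∨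
  ((∃ l, IsShortest A y x l) ∧ ∀ l, IsShortest A y x l → ArcOn a b l)

/-- A monitoring arc-geodetic set of the digraph `A`. -/
def IsMAGSet (A : V → V → Prop) (M : Set V) : Prop :=
  ∀ a b : V, A a b → ∃ x ∈ M, ∃ y ∈ M, x ≠ y ∧ Monitors A x y a b

/-- The monitoring arc-geodetic number of the digraph `A`. -/
noncomputable def mag (A : V → V → Prop) [Fintype V] : ℕ :=
  sInf {n | ∃ M : Finset V, IsMAGSet A (M : Set V) ∧ M.card = n}

/-- `A` is an orientation of the undirected simple graph `G`. -/
structure IsOrientation (G : SimpleGraph V) (A : V → V → Prop) : Prop where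
  adj_iff : ∀ u v : V, G.Adj u v ↔ (A u v ∨ A v u)
  asymm : ∀ u v : V, A u v → ¬ A v u

/-- The lower monitoring arc-geodetic number of `G`. -/
noncomputable def magMinus (G : SimpleGraph V) [Fintype V] : ℕ :=
  sInf {n | ∃ A : V → V → Prop, IsOrientation G A ∧ mag A = n}

/-- The upper monitoring arc-geodetic number of `G`. -/
noncomputable def magPlus (G : SimpleGraph V) [Fintype V] : ℕ :=
  sSup {n | ∃ A : V → V → Prop, IsOrientation G A ∧ mag A = n}

/-- A source: a vertex with no in-neighbours. -/
def IsSource (A : V → V → Prop) (v : V) : Prop := ∀ w, ¬ A w v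

/-- A sink: a vertex with no out-neighbours. -/
def IsSink (A : V → V → Prop) (v : V) : Prop := ∀ w, ¬ A v w

/-- An oriented graph: no loops and no pair of opposite arcs. -/
def IsOrientedGraph (A : V → V → Prop) : Prop :=
  (∀ v, ¬ A v v) ∧ ∀ u v : V, A u v → ¬ A v u

/-- The underlying undirected graph of `A` is connected. -/
def IsConnectedDigraph (A : V → V → Prop) : Prop :=
  ∀ x y : V, Relation.ReflTransGen (fun a b => A a b ∨ A b a) x y


end MAG

/-!
Every leaf of a tree is a source or a sink of any orientation, and a shortest directed path
through its arc must then start or end there; so every monitoring arc-geodetic set contains all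
leaves. Conversely, orient the tree away from a leaf `r`, i.e. along increasing distance from
`r`. Every arc `a → b` extends forward to a sink `y`, which is a leaf, and the directed path
from `r` to `y` through `a → b` is the only directed path from `r` to `y`, since every vertex
other than `r` has exactly one in-neighbour. Hence the leaves monitor every arc.
-/

namespace SimpleGraph

variable {V : Type*} {G : SimpleGraph V}

lemma IsTree.length_eq_dist_of_isPath (hG : G.IsTree) {u v : V} {p : G.Walk u v}
    (hp : p.IsPath) : p.length = G.dist u v := by
  obtain ⟨q, hq, hlen⟩ := hG.connected.exists_path_of_dist u v
  rw [← hlen, Subtype.mk.inj ((hG.isAcyclic.subsingleton_path u v).elim ⟨p, hp⟩ ⟨q, hq⟩)]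

lemma IsTree.eq_of_adj_of_dist_add_one (hG : G.IsTree) (r : V) {u₁ u₂ v : V}
    (h₁ : G.Adj u₁ v) (h₂ : G.Adj u₂ v) (d₁ : G.dist r u₁ + 1 = G.dist r v)
    (d₂ : G.dist r u₂ + 1 = G.dist r v) : u₁ = u₂ := by
  obtain ⟨p, hp, hlen⟩ := hG.connected.exists_path_of_dist r v
  -- a parent off the path `p` would yield a second path to it, of the wrong length
  have key : ∀ u, G.Adj u v → G.dist r u + 1 = G.dist r v → u = p.penultimate := by
    refine fun u h d => hG.isAcyclic.eq_penultimate_of_adj_end hp h.symm ?_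
    by_contra hu
    have := hG.length_eq_dist_of_isPath (hp.concat hu h.symm)
    rw [Walk.length_concat] at this
    omega
  rw [key u₁ h₁ d₁, key u₂ h₂ d₂]

lemma IsTree.degree_eq_one_of_forall_adj_dist_ne (hG : G.IsTree) {r v : V}
    [Fintype (G.neighborSet v)] (hvr : v ≠ r)
    (hv : ∀ u, G.Adj v u → G.dist r u ≠ G.dist r v + 1) : G.degree v = 1 := by
  have hparent : ∀ u, G.Adj v u → G.dist r u + 1 = G.dist r v := fun u h => by
    have := hG.dist_eq_dist_add_one_of_adj r h
    have := hv u h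
    omega
  obtain ⟨p, -, -⟩ := hG.connected.exists_path_of_dist r v
  have hadj := (p.adj_penultimate (Walk.not_nil_of_ne hvr.symm)).symm
  exact degree_eq_one_iff_existsUnique_adj.mpr ⟨_, hadj, fun u hu =>
    hG.eq_of_adj_of_dist_add_one r hu.symm hadj.symm (hparent u hu) (hparent _ hadj)⟩

end SimpleGraph

namespace MAG

variable {V : Type*}

open SimpleGraph

section Digraph

variable {A : V → V → Prop}

lemma ArcOn.left_mem {a b : V} {l : List V} (h : ArcOn a b l) : a ∈ l := by
  obtain ⟨l₁, l₂, rfl⟩ := h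
  simp

lemma ArcOn.right_mem {a b : V} {l : List V} (h : ArcOn a b l) : b ∈ l := by
  obtain ⟨l₁, l₂, rfl⟩ := h
  simp

namespace DWalk

variable {x y : V} {l : List V}

lemma exists_eq_cons (h : DWalk A x y l) : ∃ t, l = x :: t := by
  cases h <;> exact ⟨_, rfl⟩

lemma length_pos (h : DWalk A x y l) : 0 < l.length := by
  obtain ⟨t, rfl⟩ := h.exists_eq_cons
  simp

lemma append {a b : V} {la lb : List V} (ha : DWalk A x a la) (hab : A a b)
    (hb : DWalk A b y lb) : DWalk A x y (la ++ lb) := by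
  induction ha with
  | nil => exact .cons hab hb
  | cons h _ ih => exact .cons h (ih hab)

lemma arcOn_append {a b : V} {la lb : List V} (ha : DWalk A x a la) (hb : DWalk A b y lb) :
    ArcOn a b (la ++ lb) := by
  induction ha with
  | nil =>
    obtain ⟨t, rfl⟩ := hb.exists_eq_cons
    exact ⟨[], t, rfl⟩
  | @cons u _ _ _ _ _ ih =>
    obtain ⟨l₁, l₂, he⟩ := ih
    exact ⟨u :: l₁, l₂, by simp [he]⟩

lemma eq_of_isSource {v : V} (h : DWalk A x y l) (hv : IsSource A v) (hvl : v ∈ l) : x = v := by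
  induction h with
  | nil => exact (List.mem_singleton.mp hvl).symm
  | cons hu _ ih =>
    rcases List.mem_cons.mp hvl with rfl | hvl
    · rfl
    · obtain rfl := ih hvl
      exact absurd hu (hv _)

lemma eq_of_isSink {v : V} (h : DWalk A x y l) (hv : IsSink A v) (hvl : v ∈ l) : y = v := by
  induction h with
  | nil => exact (List.mem_singleton.mp hvl).symm
  | cons hu _ ih =>
    rcases List.mem_cons.mp hvl with rfl | hvl
    · exact absurd hu (hv _)
    · exact ih hvl

lemma two_le_length (h : DWalk A x y l) (hxy : x ≠ y) : 2 ≤ l.length := by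
  cases h with
  | nil => exact absurd rfl hxy
  | cons _ p => have := p.length_pos; simp only [List.length_cons]; omega

lemma eq_pair_of_length_eq_two (h : DWalk A x y l) (hl : l.length = 2) : l = [x, y] := by
  cases h with
  | nil => simp at hl
  | cons _ p =>
    cases p with
    | nil => rfl
    | cons _ q => have := q.length_pos; simp only [List.length_cons] at hl; omega

lemma length_add_eq {f : V → ℕ} (hf : ∀ u v, A u v → f v = f u + 1) (h : DWalk A x y l) :
    l.length + f x = f y + 1 := by
  induction h with
  | nil => simp only [List.length_singleton]; omega
  | cons hu _ ih => simp only [List.length_cons]; have := hf _ _ hu; omega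

lemma eq_of_length_eq (huniq : ∀ u₁ u₂ v, A u₁ v → A u₂ v → u₁ = u₂) {x' : V}
    {l' : List V} (h : DWalk A x y l) (h' : DWalk A x' y l') (hlen : l.length = l'.length) :
    l = l' := by
  induction h generalizing x' l' with
  | nil =>
    cases h' with
    | nil => rfl
    | cons _ p =>
      have := p.length_pos
      simp only [List.length_cons, List.length_nil] at hlen
      omega
  | cons hu p ih =>
    cases h' with
    | nil =>
      have := p.length_pos
      simp only [List.length_cons, List.length_nil] at hlen
      omega
    | cons hu' p' =>
      obtain rfl := ih p' (by simpa using hlen)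
      obtain ⟨t, ht⟩ := p.exists_eq_cons
      obtain ⟨t', ht'⟩ := p'.exists_eq_cons
      obtain rfl := List.head_eq_of_cons_eq (ht.symm.trans ht')
      rw [huniq _ _ _ hu hu']

lemma exists_isSink [Finite V] {f : V → ℕ} (hf : ∀ u v, A u v → f v = f u + 1) (x : V) :
    ∃ y l, DWalk A x y l ∧ IsSink A y := by
  obtain ⟨y, ⟨l, hl⟩, hmax⟩ :=
    Set.exists_max_image {y | ∃ l, DWalk A x y l} f (Set.toFinite _) ⟨x, [x], .nil x⟩
  refine ⟨y, l, hl, fun w hw => ?_⟩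
  have := hmax w ⟨l ++ [w], hl.append hw (.nil w)⟩
  have := hf _ _ hw
  omega

end DWalk

lemma monitors_of_arc (hA : ∀ a, ¬ A a a) {a b : V} (hab : A a b) : Monitors A a b a b := by
  have hne : a ≠ b := by rintro rfl; exact hA a hab
  have hwalk : DWalk A a b [a, b] := .cons hab (.nil b)
  refine Or.inl ⟨⟨[a, b], hwalk, fun l hl => hl.two_le_length hne⟩, fun l hl => ?_⟩
  rw [hl.1.eq_pair_of_length_eq_two (le_antisymm (hl.2 _ hwalk) (hl.1.two_le_length hne))]
  exact ⟨[], [], rfl⟩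

lemma isMAGSet_univ (hA : ∀ a, ¬ A a a) : IsMAGSet A Set.univ := fun a b hab =>
  ⟨a, trivial, b, trivial, fun h => hA a (h ▸ hab), monitors_of_arc hA hab⟩

lemma IsMAGSet.exists_dWalk_arcOn {M : Set V} (hM : IsMAGSet A M) {a b : V} (hab : A a b) :
    ∃ x ∈ M, ∃ y ∈ M, ∃ l, DWalk A x y l ∧ ArcOn a b l := by
  obtain ⟨x, hx, y, hy, -, ⟨⟨l, hl⟩, hall⟩ | ⟨⟨l, hl⟩, hall⟩⟩ := hM a b hab
  · exact ⟨x, hx, y, hy, l, hl.1, hall l hl⟩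
  · exact ⟨y, hy, x, hx, l, hl.1, hall l hl⟩

lemma IsMAGSet.mem_of_isSource {M : Set V} (hM : IsMAGSet A M) {v w : V} (hv : IsSource A v)
    (hvw : A v w) : v ∈ M := by
  obtain ⟨x, hx, _, _, l, hl, hon⟩ := hM.exists_dWalk_arcOn hvw
  exact hl.eq_of_isSource hv hon.left_mem ▸ hx

lemma IsMAGSet.mem_of_isSink {M : Set V} (hM : IsMAGSet A M) {v w : V} (hv : IsSink A v)
    (hwv : A w v) : v ∈ M := by
  obtain ⟨_, _, y, hy, l, hl, hon⟩ := hM.exists_dWalk_arcOn hwv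
  exact hl.eq_of_isSink hv hon.right_mem ▸ hy

lemma mag_le [Fintype V] {M : Finset V} (hM : IsMAGSet A M) : mag A ≤ M.card :=
  Nat.sInf_le ⟨M, hM, rfl⟩

lemma card_le_mag [Fintype V] (hA : ∀ a, ¬ A a a) {s : Finset V}
    (hs : ∀ M : Set V, IsMAGSet A M → ↑s ⊆ M) : s.card ≤ mag A := by
  -- `mag A` is an `sInf` in `ℕ`, so it is attained only once the set is known to be nonempty
  have hne : {n | ∃ M : Finset V, IsMAGSet A M ∧ M.card = n}.Nonempty :=
    ⟨_, Finset.univ, by simpa using isMAGSet_univ hA, rfl⟩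
  obtain ⟨M, hM, hcard⟩ := Nat.sInf_mem hne
  unfold mag
  exact hcard ▸ Finset.card_le_card (by exact_mod_cast hs M hM)

end Digraph

section Orientation

variable {G : SimpleGraph V} {A : V → V → Prop}

lemma IsOrientation.isSource_or_isSink_of_degree_eq_one (hA : IsOrientation G A) {v : V}
    [Fintype (G.neighborSet v)] (hv : G.degree v = 1) :
    ∃ w, IsSource A v ∧ A v w ∨ IsSink A v ∧ A w v := by
  obtain ⟨w, hvw, huniq⟩ := degree_eq_one_iff_existsUnique_adj.mp hv
  refine ⟨w, ((hA.adj_iff v w).mp hvw).imp (fun h => ⟨fun u hu => ?_, h⟩) fun h =>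
    ⟨fun u hu => ?_, h⟩⟩
  · obtain rfl := huniq u ((hA.adj_iff v u).mpr (Or.inr hu))
    exact hA.asymm _ _ h hu
  · obtain rfl := huniq u ((hA.adj_iff v u).mpr (Or.inl hu))
    exact hA.asymm _ _ h hu

lemma IsOrientation.card_leaves_le_mag [Fintype V] [DecidableRel G.Adj]
    (hA : IsOrientation G A) : (Finset.univ.filter fun v => G.degree v = 1).card ≤ mag A := by
  refine card_le_mag (fun a h => hA.asymm a a h h) fun M hM v hv => ?_
  obtain ⟨w, ⟨hsrc, hvw⟩ | ⟨hsnk, hwv⟩⟩ :=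
    hA.isSource_or_isSink_of_degree_eq_one (Finset.mem_filter.mp hv).2
  exacts [hM.mem_of_isSource hsrc hvw, hM.mem_of_isSink hsnk hwv]

end Orientation

section Tree

variable {G : SimpleGraph V}

/-- In a tree this orients every edge away from `r`; in general, edges between vertices at equal
distance from `r` get no arc. -/
def distOrientation (G : SimpleGraph V) (r u v : V) : Prop :=
  G.Adj u v ∧ G.dist r u + 1 = G.dist r v

lemma isOrientation_distOrientation (hG : G.IsTree) (r : V) :
    IsOrientation G (distOrientation G r) where
  adj_iff u v := by
    refine ⟨fun h => ?_, by rintro (⟨h, -⟩ | ⟨h, -⟩); exacts [h, h.symm]⟩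
    rcases hG.dist_eq_dist_add_one_of_adj r h with e | e
    exacts [Or.inr ⟨h.symm, e.symm⟩, Or.inl ⟨h, e.symm⟩]
  asymm _ _ h h' := by have := h.2; have := h'.2; omega

lemma dWalk_support_distOrientation (hG : G.Connected) (r : V) {u a : V} (p : G.Walk u a)
    (hp : G.dist r a = G.dist r u + p.length) : DWalk (distOrientation G r) u a p.support := by
  induction p with
  | nil => exact .nil _
  | @cons u w a h q ih =>
    have h₁ : G.dist r w ≤ G.dist r u + 1 :=
      hG.dist_triangle.trans_eq (by rw [dist_eq_one_iff_adj.mpr h])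
    have h₂ : G.dist r a ≤ G.dist r w + q.length :=
      hG.dist_triangle.trans (Nat.add_le_add_left (dist_le q) _)
    rw [Walk.length_cons] at hp
    exact .cons ⟨h, by omega⟩ (ih (by omega))

lemma exists_dWalk_distOrientation (hG : G.Connected) (r a : V) :
    ∃ l, DWalk (distOrientation G r) r a l := by
  obtain ⟨p, hp⟩ := hG.exists_walk_length_eq_dist r a
  exact ⟨_, dWalk_support_distOrientation hG r p (by simp [hp])⟩

lemma isMAGSet_distOrientation [Fintype V] [DecidableRel G.Adj] (hG : G.IsTree) {r : V}
    (hr : G.degree r = 1) : IsMAGSet (distOrientation G r) {v | G.degree v = 1} := by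
  set A := distOrientation G r
  have hf : ∀ u v, A u v → G.dist r v = G.dist r u + 1 := fun _ _ h => h.2.symm
  have huniq : ∀ u₁ u₂ v, A u₁ v → A u₂ v → u₁ = u₂ :=
    fun _ _ _ h₁ h₂ => hG.eq_of_adj_of_dist_add_one r h₁.1 h₂.1 h₁.2 h₂.2
  intro a b hab
  obtain ⟨la, hla⟩ := exists_dWalk_distOrientation hG.connected r a
  obtain ⟨y, lb, hlb, hy⟩ := DWalk.exists_isSink hf b
  have hwalk := hla.append hab hlb
  have hlen : ∀ l, DWalk A r y l → l.length = (la ++ lb).length := by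
    intro l hl
    have := hl.length_add_eq hf
    have := hwalk.length_add_eq hf
    omega
  have hyr : y ≠ r := by
    rintro rfl
    have hw := hwalk.length_add_eq hf
    have := hla.length_pos
    have := hlb.length_pos
    simp only [List.length_append] at hw
    omega
  refine ⟨r, hr, y, hG.degree_eq_one_of_forall_adj_dist_ne hyr fun u h e => hy u ⟨h, e.symm⟩,
    hyr.symm, Or.inl ⟨⟨_, hwalk, fun l hl => (hlen l hl).ge⟩, fun l hl => ?_⟩⟩
  rw [DWalk.eq_of_length_eq huniq hl.1 hwalk (hlen l hl.1)]
  exact hla.arcOn_append hlb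

end Tree

/-- for every tree `G`, the lower monitoring arc-geodetic number
equals the number of vertices of degree `1`. -/
theorem tree_magMinus_eq_leaves {V : Type*} [Fintype V] [Nontrivial V]
    (G : SimpleGraph V) [DecidableRel G.Adj]
    (htree : G.Connected ∧ G.IsAcyclic) :
    magMinus G = (Finset.univ.filter fun v : V => G.degree v = 1).card := by
  have hG : G.IsTree := ⟨htree.1, htree.2⟩
  obtain ⟨r, hr⟩ := hG.exists_vert_degree_one_of_nontrivial
  have hA₀ := isOrientation_distOrientation hG r
  refine le_antisymm ?_ (le_csInf ⟨_, _, hA₀, rfl⟩ ?_)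
  · calc magMinus G ≤ mag (distOrientation G r) := Nat.sInf_le ⟨_, hA₀, rfl⟩
      _ ≤ _ := mag_le (by simpa using isMAGSet_distOrientation hG hr)
  · rintro _ ⟨A, hA, rfl⟩
    exact hA.card_leaves_le_mag

end MAG
end

section
/- For the cycle C_n with n ≥ 4: if n is odd then the upper monitoring arc-geodetic number of C_n equals n−1, and if n is even then it equals n. Moreover, mag^+(C_3) = 3 and mag^-(C_n) = 2 for all n ≥ 3. -/
/-!
Every orientation with an arc needs two monitoring vertices, and the directed cycle needs no
more: the only walk from `1` to `0` runs through every arc except `0 → 1`.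

For `mag⁺`, an arc from a source `a` to a vertex `b` whose out-neighbours are all
out-neighbours of `a` lies on no shortest walk but itself, so its ends belong to every
monitoring set. On an even cycle, orienting a proper 2-colouring from one class to the other
makes every arc such an arc, forcing all `n` vertices. An odd cycle is not bipartite, so every
orientation has a vertex `b` that is neither a source nor a sink; for `n ≥ 5` its two arcs lie
on the unique shortest walk between its two non-adjacent neighbours, so all vertices but `b`
form a monitoring set. Orienting the path `0, …, n - 1` alternately and the closing edge into
`0` forces all vertices but `0`; for `n = 3` this orientation is transitive and forces all three.
-/

namespace MAG

variable {V : Type*}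

section Walks

variable {A : V → V → Prop} {x y a b : V} {l : List V}

@[simp]
lemma not_dWalk_nil : ¬ DWalk A x y [] := nofun

@[simp]
lemma dWalk_singleton_iff {u : V} : DWalk A x y [u] ↔ x = u ∧ y = u := by
  constructor
  · rintro (_ | ⟨_, ⟨⟩⟩)
    exact ⟨rfl, rfl⟩
  · rintro ⟨rfl, rfl⟩
    exact .nil _

@[simp]
lemma dWalk_cons_cons_iff {u v : V} :
    DWalk A x y (u :: v :: l) ↔ x = u ∧ A u v ∧ DWalk A v y (v :: l) := by
  constructor
  · rintro (_ | ⟨huw, p⟩)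
    cases p with
    | nil => exact ⟨rfl, huw, .nil _⟩
    | cons h p => exact ⟨rfl, huw, .cons h p⟩
  · rintro ⟨rfl, hxv, p⟩
    exact .cons hxv p

lemma DWalk.exists_eq_cons_s9 (h : DWalk A x y l) : ∃ t, l = x :: t := by
  cases h <;> exact ⟨_, rfl⟩

lemma ArcOn.cons (h : ArcOn a b l) (u : V) : ArcOn a b (u :: l) := by
  obtain ⟨l₁, l₂, rfl⟩ := h
  exact ⟨u :: l₁, l₂, rfl⟩

lemma DWalk.adj_of_arcOn (h : DWalk A x y l) (hab : ArcOn a b l) : A a b := by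
  induction h with
  | nil v =>
    obtain ⟨l₁, l₂, he⟩ := hab
    have := congrArg List.length he
    simp at this
    omega
  | cons huv p ih =>
    obtain ⟨_ | ⟨w, l₁⟩, l₂, he⟩ := hab
    · obtain ⟨t, rfl⟩ := p.exists_eq_cons_s9
      simp only [List.nil_append, List.cons.injEq] at he
      obtain ⟨rfl, rfl, -⟩ := he
      exact huv
    · exact ih ⟨l₁, l₂, (List.cons.inj he).2⟩

lemma DWalk.exists_arcOn_of_mem_of_notMem (S : Set V) (h : DWalk A x y l) (hx : x ∈ S)
    (hy : y ∉ S) : ∃ u ∈ S, ∃ v ∉ S, A u v ∧ ArcOn u v l := by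
  induction h with
  | nil v => exact absurd hx hy
  | @cons u w _ _ huw p ih =>
    by_cases hw : w ∈ S
    · obtain ⟨u', hu', v', hv', huv', harc⟩ := ih hw hy
      exact ⟨u', hu', v', hv', huv', harc.cons u⟩
    · obtain ⟨t, rfl⟩ := p.exists_eq_cons_s9
      exact ⟨u, hx, w, hw, huw, [], t, rfl⟩

lemma exists_isShortest (h : ∃ l, DWalk A x y l) : ∃ l, IsShortest A x y l := by
  obtain ⟨l, hl, hmin⟩ := (measure List.length).wf.has_min {l | DWalk A x y l} h
  exact ⟨l, hl, fun l' hl' => not_lt.mp (hmin l' hl')⟩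

lemma DWalk.two_le_length_s9 (h : DWalk A x y l) (hxy : x ≠ y) : 2 ≤ l.length := by
  rcases l with _ | ⟨u, _ | ⟨v, t⟩⟩
  · simp at h
  · simp_all
  · simp

lemma DWalk.three_le_length (h : DWalk A x y l) (hxy : x ≠ y) (hnA : ¬ A x y) :
    3 ≤ l.length := by
  rcases l with _ | ⟨u, _ | ⟨v, _ | ⟨w, t⟩⟩⟩
  · simp at h
  · simp_all
  · simp_all
  · simp

end Walks

section Monitoring

variable {A : V → V → Prop} {x y a b : V} {l : List V}

lemma monitors_of_isShortest_unique (hl : IsShortest A x y l)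
    (huniq : ∀ l', IsShortest A x y l' → l' = l) (hab : ArcOn a b l) :
    Monitors A x y a b :=
  .inl ⟨⟨l, hl⟩, fun l' hl' => huniq l' hl' ▸ hab⟩

lemma monitors_self (hab : A a b) (hne : a ≠ b) : Monitors A a b a b := by
  have hpair : DWalk A a b [a, b] := by simpa using hab
  refine monitors_of_isShortest_unique ⟨hpair, fun l hl => hl.two_le_length_s9 hne⟩
    (fun l hl => ?_) ⟨[], [], rfl⟩
  obtain ⟨u, v, rfl⟩ :=
    List.length_eq_two.mp (le_antisymm (hl.2 _ hpair) (hl.1.two_le_length_s9 hne))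
  obtain ⟨rfl, -, rfl⟩ := by simpa using hl.1
  rfl

/-- A shortest walk through such an arc starts at the source `a` and could skip `b`. -/
lemma IsShortest.eq_pair_of_arcOn (hl : IsShortest A x y l) (hab : ArcOn a b l)
    (ha : IsSource A a) (hb : ∀ c, A b c → A a c) : l = [a, b] := by
  obtain ⟨l₁, l₂, rfl⟩ := hab
  obtain rfl : l₁ = [] := by
    rcases l₁.eq_nil_or_concat with h | ⟨l₁, w, rfl⟩
    · exact h
    · exact absurd (hl.1.adj_of_arcOn ⟨l₁, b :: l₂, by simp⟩) (ha w)
  rcases l₂ with _ | ⟨c, t⟩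
  · rfl
  · obtain ⟨hxa, -, hbc, p⟩ := by simpa using hl.1
    have := hl.2 (a :: c :: t) (dWalk_cons_cons_iff.mpr ⟨hxa, hb c hbc, p⟩)
    simp at this

lemma Monitors.eq_of_isSource (h : Monitors A x y a b) (ha : IsSource A a)
    (hb : ∀ c, A b c → A a c) : (x = a ∧ y = b) ∨ (x = b ∧ y = a) := by
  rcases h with ⟨⟨l, hl⟩, hall⟩ | ⟨⟨l, hl⟩, hall⟩
  · have hwalk := hl.eq_pair_of_arcOn (hall l hl) ha hb ▸ hl.1
    simp only [dWalk_cons_cons_iff, dWalk_singleton_iff, true_and] at hwalk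
    exact .inl ⟨hwalk.1, hwalk.2.2⟩
  · have hwalk := hl.eq_pair_of_arcOn (hall l hl) ha hb ▸ hl.1
    simp only [dWalk_cons_cons_iff, dWalk_singleton_iff, true_and] at hwalk
    exact .inr ⟨hwalk.2.2, hwalk.1⟩

lemma IsMAGSet.mem_of_isSource_s9 {M : Set V} (hM : IsMAGSet A M) (hab : A a b)
    (ha : IsSource A a) (hb : ∀ c, A b c → A a c) : a ∈ M ∧ b ∈ M := by
  obtain ⟨x, hx, y, hy, -, hmon⟩ := hM a b hab
  rcases hmon.eq_of_isSource ha hb with ⟨rfl, rfl⟩ | ⟨rfl, rfl⟩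
  exacts [⟨hx, hy⟩, ⟨hy, hx⟩]

lemma IsMAGSet.mem_of_isSource_of_isSink {M : Set V} (hM : IsMAGSet A M) (hab : A a b)
    (ha : IsSource A a) (hb : IsSink A b) : a ∈ M ∧ b ∈ M :=
  hM.mem_of_isSource_s9 hab ha fun c hbc => absurd hbc (hb c)

lemma isMAGSet_univ_s9 (hirr : ∀ v, ¬ A v v) : IsMAGSet A Set.univ := fun a b hab =>
  have hne : a ≠ b := fun h => hirr a (h ▸ hab)
  ⟨a, trivial, b, trivial, hne, monitors_self hab hne⟩

end Monitoring

section MagBounds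

variable [Fintype V] {A : V → V → Prop}

lemma mag_le_card_of_isMAGSet {M : Finset V} (hM : IsMAGSet A M) : mag A ≤ M.card :=
  Nat.sInf_le ⟨M, hM, rfl⟩

lemma mag_le_card (hirr : ∀ v, ¬ A v v) : mag A ≤ Fintype.card V :=
  mag_le_card_of_isMAGSet (M := Finset.univ) (by simpa using isMAGSet_univ_s9 hirr)

lemma le_mag (hirr : ∀ v, ¬ A v v) {k : ℕ}
    (h : ∀ M : Finset V, IsMAGSet A M → k ≤ M.card) : k ≤ mag A := by
  refine le_csInf ⟨_, Finset.univ, by simpa using isMAGSet_univ_s9 hirr, rfl⟩ ?_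
  rintro _ ⟨M, hM, rfl⟩
  exact h M hM

lemma two_le_mag (hirr : ∀ v, ¬ A v v) {a b : V} (hab : A a b) : 2 ≤ mag A := by
  refine le_mag hirr fun M hM => ?_
  obtain ⟨x, hx, y, hy, hxy, -⟩ := hM a b hab
  exact Finset.one_lt_card.mpr ⟨x, hx, y, hy, hxy⟩

lemma card_le_mag_s9 (hirr : ∀ v, ¬ A v v) {S : Finset V}
    (h : ∀ M : Finset V, IsMAGSet A M → S ⊆ M) : S.card ≤ mag A :=
  le_mag hirr fun M hM => Finset.card_le_card (h M hM)

end MagBounds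

section Orientation

variable {G : SimpleGraph V} {A : V → V → Prop}

lemma IsOrientation.irrefl (hA : IsOrientation G A) (v : V) : ¬ A v v :=
  fun h => hA.asymm v v h h

lemma IsOrientation.adj (hA : IsOrientation G A) {u v : V} (h : A u v) : G.Adj u v :=
  (hA.adj_iff u v).mpr (.inl h)

lemma magPlus_eq [Fintype V] {k : ℕ} (hle : ∀ A, IsOrientation G A → mag A ≤ k)
    (hA : IsOrientation G A) (hk : k ≤ mag A) : magPlus G = k :=
  IsGreatest.csSup_eq ⟨⟨A, hA, le_antisymm (hle A hA) hk⟩, fun _ ⟨B, hB, hBk⟩ => hBk ▸ hle B hB⟩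

lemma magMinus_eq [Fintype V] {k : ℕ} (hle : ∀ A, IsOrientation G A → k ≤ mag A)
    (hA : IsOrientation G A) (hk : mag A ≤ k) : magMinus G = k :=
  IsLeast.csInf_eq ⟨⟨A, hA, le_antisymm hk (hle A hA)⟩, fun _ ⟨B, hB, hBk⟩ => hBk ▸ hle B hB⟩

/-- If every vertex is a source or a sink, being a source is a proper 2-colouring. -/
lemma IsOrientation.exists_not_isSource_not_isSink (hA : IsOrientation G A)
    (hG : ¬ G.Colorable 2) : ∃ b, ¬ IsSource A b ∧ ¬ IsSink A b := by
  classical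
  by_contra! h
  refine hG ⟨.mk (fun v => if IsSource A v then (0 : Fin 2) else 1) fun {u v} huv => ?_⟩
  have key : ∀ u v, A u v → IsSource A u ∧ ¬ IsSource A v := fun u v huv =>
    ⟨not_not.mp fun hu => h u hu v huv, fun hv => hv u huv⟩
  rcases (hA.adj_iff u v).mp huv with huv | hvu
  · simp [(key u v huv).1, (key u v huv).2]
  · simp [(key v u hvu).1, (key v u hvu).2]

/-- The arcs at `b` are monitored by `c` and `d`, whose only shortest walk is `c → b → d`. -/
theorem mag_le_card_sub_one [Fintype V] (hA : IsOrientation G A) {b c d : V}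
    (hcb : A c b) (hbd : A b d) (hdeg : ∀ u, G.Adj b u → u = c ∨ u = d)
    (hcd : ¬ G.Adj c d) (hmid : ∀ x, G.Adj c x → G.Adj x d → x = b) :
    mag A ≤ Fintype.card V - 1 := by
  classical
  have hcd' : c ≠ d := by rintro rfl; exact hA.asymm _ _ hcb hbd
  have hncd : ¬ A c d := fun h => hcd (hA.adj h)
  have hwalk : DWalk A c d [c, b, d] := by simpa using ⟨hcb, hbd⟩
  have hshort : IsShortest A c d [c, b, d] :=
    ⟨hwalk, fun l hl => hl.three_le_length hcd' hncd⟩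
  have huniq : ∀ l, IsShortest A c d l → l = [c, b, d] := by
    intro l hl
    obtain ⟨u, x, w, rfl⟩ := List.length_eq_three.mp
      (le_antisymm (hl.2 _ hwalk) (hl.1.three_le_length hcd' hncd))
    obtain ⟨rfl, hcx, hxw, rfl⟩ := by simpa using hl.1
    rw [hmid x (hA.adj hcx) (hA.adj hxw)]
  have hmon : ∀ a e, ArcOn a e [c, b, d] → Monitors A c d a e :=
    fun a e => monitors_of_isShortest_unique hshort huniq
  refine (mag_le_card_of_isMAGSet (M := Finset.univ.erase b) fun u v huv => ?_).trans
    (by simp [Finset.card_erase_of_mem])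
  have hc : c ∈ (Finset.univ.erase b : Set V) := by simpa using (hA.adj hcb).ne
  have hd : d ∈ (Finset.univ.erase b : Set V) := by simpa using (hA.adj hbd).ne.symm
  by_cases hub : u = b
  · subst hub
    obtain rfl : v = d := (hdeg v (hA.adj huv)).resolve_left fun h => hA.asymm _ _ hcb (h ▸ huv)
    exact ⟨c, hc, v, hd, hcd', hmon _ _ ⟨[c], [], rfl⟩⟩
  by_cases hvb : v = b
  · subst hvb
    obtain rfl : u = c := (hdeg u (hA.adj huv).symm).resolve_right
      fun h => hA.asymm _ _ hbd (h ▸ huv)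
    exact ⟨u, hc, d, hd, hcd', hmon _ _ ⟨[], [d], rfl⟩⟩
  exact ⟨u, by simpa using hub, v, by simpa using hvb, (hA.adj huv).ne,
    monitors_self huv (hA.adj huv).ne⟩

end Orientation

section Bipartite

variable {G : SimpleGraph V} (col : G.Coloring Bool)

def bipartiteOrientation : V → V → Prop := fun u v => G.Adj u v ∧ col u = true

lemma isOrientation_bipartiteOrientation : IsOrientation G (bipartiteOrientation col) where
  adj_iff u v := by
    have := col.valid (G := G) (v := u) (w := v)
    cases hu : col u <;> cases hv : col v <;> simp_all [bipartiteOrientation, G.adj_comm]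
  asymm u v huv hvu := col.valid huv.1 (huv.2.trans hvu.2.symm)

lemma isSource_of_bipartiteOrientation {u v : V} (huv : bipartiteOrientation col u v) :
    IsSource (bipartiteOrientation col) u :=
  fun _ hwu => by simpa [hwu.2, huv.2] using col.valid hwu.1

lemma isSink_of_bipartiteOrientation {u v : V} (huv : bipartiteOrientation col u v) :
    IsSink (bipartiteOrientation col) v :=
  fun _ hvw => by simpa [huv.2, hvw.2] using col.valid huv.1

lemma mag_bipartiteOrientation [Fintype V] (hG : ∀ v, ∃ w, G.Adj v w) :
    mag (bipartiteOrientation col) = Fintype.card V := by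
  have hA := isOrientation_bipartiteOrientation col
  refine le_antisymm (mag_le_card hA.irrefl) ?_
  refine Finset.card_univ.ge.trans (card_le_mag_s9 hA.irrefl fun M hM v _ => ?_)
  obtain ⟨w, hvw⟩ := hG v
  rcases (hA.adj_iff v w).mp hvw with h | h
  · exact (hM.mem_of_isSource_of_isSink h (isSource_of_bipartiteOrientation col h)
      (isSink_of_bipartiteOrientation col h)).1
  · exact (hM.mem_of_isSource_of_isSink h (isSource_of_bipartiteOrientation col h)
      (isSink_of_bipartiteOrientation col h)).2

end Bipartite

section Cycle

open SimpleGraph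

variable {n : ℕ}

lemma cycleGraph_adj_iff_val (hn : 2 ≤ n) {u v : Fin n} :
    (cycleGraph n).Adj u v ↔
      u.val + 1 = v.val ∨ v.val + 1 = u.val ∨
        (u.val = 0 ∧ v.val + 1 = n) ∨ (v.val = 0 ∧ u.val + 1 = n) := by
  have hu := u.isLt
  have hv := v.isLt
  rw [cycleGraph_adj']
  rcases lt_trichotomy u v with h | rfl | h
  · rw [Fin.coe_sub_iff_lt.mpr h, Fin.coe_sub_iff_le.mpr h.le]
    omega
  · rw [Fin.coe_sub_iff_le.mpr le_rfl]
    omega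
  · rw [Fin.coe_sub_iff_le.mpr h.le, Fin.coe_sub_iff_lt.mpr h]
    omega

lemma exists_adj_cycleGraph (hn : 2 ≤ n) (v : Fin n) : ∃ w, (cycleGraph n).Adj v w := by
  by_cases hv : v.val + 1 < n
  · exact ⟨⟨v.val + 1, hv⟩, (cycleGraph_adj_iff_val hn).mpr (by simp)⟩
  · exact ⟨⟨0, by omega⟩, (cycleGraph_adj_iff_val hn).mpr (by simp; omega)⟩

lemma not_colorable_two_cycleGraph (hn : 2 ≤ n) (hodd : Odd n) :
    ¬ (cycleGraph n).Colorable 2 := fun h =>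
  absurd (chromaticNumber_cycleGraph_of_odd n hn hodd ▸ h.chromaticNumber_le) (by norm_num)

lemma val_one_of_two_le [NeZero n] (hn : 2 ≤ n) : (1 : Fin n).val = 1 := by
  rw [Fin.val_one', Nat.mod_eq_of_lt hn]

lemma eq_add_one_iff_val [NeZero n] (hn : 2 ≤ n) {u v : Fin n} :
    v = u + 1 ↔ u.val + 1 = v.val ∨ (u.val + 1 = n ∧ v.val = 0) := by
  have hu := u.isLt
  rw [Fin.ext_iff, Fin.val_add, Fin.val_one', Nat.mod_eq_of_lt hn]
  rcases Nat.lt_or_ge (u.val + 1) n with h | h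
  · rw [Nat.mod_eq_of_lt h]
    omega
  · rw [show u.val + 1 = n by omega, Nat.mod_self]
    omega

end Cycle

section DirectedCycle

open SimpleGraph Fin.NatCast

variable {n : ℕ} [NeZero n]

def dirCycle (n : ℕ) [NeZero n] : Fin n → Fin n → Prop := fun u v => v = u + 1

lemma isOrientation_dirCycle (hn : 3 ≤ n) : IsOrientation (cycleGraph n) (dirCycle n) where
  adj_iff u v := by
    simp only [dirCycle, cycleGraph_adj_iff_val (by omega : 2 ≤ n),
      eq_add_one_iff_val (by omega : 2 ≤ n)]
    omega
  asymm u v := by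
    simp only [dirCycle, eq_add_one_iff_val (by omega : 2 ≤ n)]
    omega

lemma exists_dWalk_dirCycle (x : Fin n) (k : ℕ) : ∃ l, DWalk (dirCycle n) x (x + k) l := by
  induction k generalizing x with
  | zero => exact ⟨[x], by simp⟩
  | succ k ih =>
    obtain ⟨l, hl⟩ := ih (x + 1)
    refine ⟨x :: l, .cons rfl ?_⟩
    rwa [Nat.cast_succ, add_comm (k : Fin n), ← add_assoc]

/-- Every walk from `1` to `0` leaves the set `{1, …, a}` through the arc `(a, a + 1)`. -/
lemma DWalk.arcOn_dirCycle_of_one_zero (hn : 2 ≤ n) {a : Fin n} (ha : a.val ≠ 0)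
    {l : List (Fin n)} (h : DWalk (dirCycle n) 1 0 l) : ArcOn a (a + 1) l := by
  obtain ⟨u, hu, v, hv, huv, harc⟩ :=
    h.exists_arcOn_of_mem_of_notMem {w : Fin n | w.val ≠ 0 ∧ w.val ≤ a.val}
      (show (1 : Fin n).val ≠ 0 ∧ (1 : Fin n).val ≤ a.val by rw [val_one_of_two_le hn]; omega)
      (by simp)
  replace hu : u.val ≠ 0 ∧ u.val ≤ a.val := hu
  replace hv : ¬ (v.val ≠ 0 ∧ v.val ≤ a.val) := hv
  have hv' := (eq_add_one_iff_val hn).mp huv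
  obtain rfl : u = a := Fin.ext (by have := a.isLt; omega)
  rwa [← huv]

lemma mag_dirCycle_le (hn : 2 ≤ n) : mag (dirCycle n) ≤ 2 := by
  have h10 : (1 : Fin n) ≠ 0 := by simp [Fin.ext_iff]; omega
  have hwalk : ∃ l, DWalk (dirCycle n) 1 0 l := by
    have h0 : (1 : Fin n) + (n - 1 : ℕ) = 0 := by
      rw [add_comm, ← Nat.cast_succ, Nat.succ_eq_add_one, Nat.sub_add_cancel (by omega),
        Fin.natCast_self]
    simpa [h0] using exists_dWalk_dirCycle (1 : Fin n) (n - 1)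
  refine (mag_le_card_of_isMAGSet (M := {0, 1}) fun a b hab => ?_).trans Finset.card_le_two
  by_cases ha : a.val = 0
  · obtain rfl : a = 0 := Fin.ext ha
    obtain rfl : b = 1 := hab.trans (zero_add 1)
    exact ⟨0, by simp, 1, by simp, h10.symm, monitors_self hab h10.symm⟩
  · obtain rfl : b = a + 1 := hab
    exact ⟨1, by simp, 0, by simp, h10,
      .inl ⟨exists_isShortest hwalk, fun l hl => hl.1.arcOn_dirCycle_of_one_zero hn ha⟩⟩

end DirectedCycle

open SimpleGraph in
theorem magMinus_cycleGraph {n : ℕ} (hn : 3 ≤ n) : magMinus (cycleGraph n) = 2 := by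
  have : NeZero n := ⟨by omega⟩
  refine magMinus_eq (fun A hA => ?_) (isOrientation_dirCycle hn) (mag_dirCycle_le (by omega))
  obtain ⟨w, hw⟩ := exists_adj_cycleGraph (by omega) (0 : Fin n)
  rcases (hA.adj_iff _ _).mp hw with h | h
  exacts [two_le_mag hA.irrefl h, two_le_mag hA.irrefl h]

section OddCycle

open SimpleGraph

variable {n : ℕ}

/-- Even vertices point to their neighbours, except that `0` points to `1` only: the closing
edge between the even vertices `n - 1` and `0` is oriented towards `0`. -/
def oddCycleOrientation (n : ℕ) : Fin n → Fin n → Prop :=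
  fun u v => (cycleGraph n).Adj u v ∧ Even u.val ∧ (Odd v.val ∨ v.val = 0)

lemma isOrientation_oddCycleOrientation (hn : 3 ≤ n) (hodd : Odd n) :
    IsOrientation (cycleGraph n) (oddCycleOrientation n) where
  adj_iff u v := by
    have := Nat.odd_iff.mp hodd
    have := u.isLt
    have := v.isLt
    simp only [oddCycleOrientation, cycleGraph_adj_iff_val (by omega : 2 ≤ n), Nat.even_iff,
      Nat.odd_iff]
    omega
  asymm u v huv hvu := by
    have := Nat.odd_iff.mp hodd
    have := (cycleGraph_adj_iff_val (by omega)).mp huv.1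
    obtain ⟨-, hu, hv⟩ := huv
    obtain ⟨-, hv', hu'⟩ := hvu
    simp only [Nat.even_iff, Nat.odd_iff] at hu hv hu' hv'
    omega

lemma isSource_oddCycleOrientation {u : Fin n} (hu : Even u.val) (hu0 : u.val ≠ 0) :
    IsSource (oddCycleOrientation n) u :=
  fun _ h => h.2.2.elim (Nat.not_odd_iff_even.mpr hu) hu0

lemma isSink_oddCycleOrientation {v : Fin n} (hv : Odd v.val) :
    IsSink (oddCycleOrientation n) v :=
  fun _ h => Nat.not_even_iff_odd.mpr hv h.2.1

lemma card_sub_one_le_mag_oddCycleOrientation (hn : 3 ≤ n) (hodd : Odd n) :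
    n - 1 ≤ mag (oddCycleOrientation n) := by
  have hA := isOrientation_oddCycleOrientation hn hodd
  have hn' := Nat.odd_iff.mp hodd
  calc n - 1 = (Finset.univ.erase (⟨0, by omega⟩ : Fin n)).card := by simp
    _ ≤ _ := card_le_mag_s9 hA.irrefl fun M hM v hv => ?_
  have hv0 : v.val ≠ 0 := fun h => (Finset.mem_erase.mp hv).1 (Fin.ext h)
  have hvn := v.isLt
  rcases Nat.even_or_odd v.val with he | ho
  · have he' := Nat.even_iff.mp he
    have hw : Odd (v.val - 1) := Nat.odd_iff.mpr (by omega)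
    have harc : oddCycleOrientation n v ⟨v.val - 1, by omega⟩ :=
      ⟨(cycleGraph_adj_iff_val (by omega)).mpr (by simp; omega), he, .inl hw⟩
    exact (hM.mem_of_isSource_of_isSink harc (isSource_oddCycleOrientation he hv0)
      (isSink_oddCycleOrientation hw)).1
  · have ho' := Nat.odd_iff.mp ho
    have hw : Even (v.val + 1) := Nat.even_iff.mpr (by omega)
    have harc : oddCycleOrientation n ⟨v.val + 1, by omega⟩ v :=
      ⟨(cycleGraph_adj_iff_val (by omega)).mpr (by simp), hw, .inl ho⟩
    exact (hM.mem_of_isSource_of_isSink harc (isSource_oddCycleOrientation hw (by simp))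
      (isSink_oddCycleOrientation ho)).2

lemma mag_oddCycleOrientation_three : mag (oddCycleOrientation 3) = 3 := by
  have hA := isOrientation_oddCycleOrientation le_rfl (by decide)
  refine le_antisymm ((mag_le_card hA.irrefl).trans_eq (Fintype.card_fin 3)) ?_
  refine (Finset.card_fin 3).ge.trans (card_le_mag_s9 hA.irrefl fun M hM v _ => ?_)
  have h21 := hM.mem_of_isSource_of_isSink (a := 2) (b := 1)
    (by unfold oddCycleOrientation; decide)
    (isSource_oddCycleOrientation (by decide) (by decide)) (isSink_oddCycleOrientation (by decide))
  -- `2 → 0` lies on no shortest walk but itself, as `2 → 1` shortcuts `2 → 0 → 1`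
  have h20 := hM.mem_of_isSource_s9 (a := 2) (b := 0) (by unfold oddCycleOrientation; decide)
    (isSource_oddCycleOrientation (by decide) (by decide)) (by unfold oddCycleOrientation; decide)
  fin_cases v <;> simp_all

end OddCycle

section MagPlus

open SimpleGraph

variable {n : ℕ}

/-- An odd cycle is not bipartite, so some vertex `b` has an in-arc from `c` and an out-arc
to `d`; for `n ≥ 5` the neighbours `c`, `d` are non-adjacent with `b` as only common
neighbour. -/
lemma mag_le_of_odd (hn : 5 ≤ n) (hodd : Odd n) {A : Fin n → Fin n → Prop}
    (hA : IsOrientation (cycleGraph n) A) : mag A ≤ n - 1 := by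
  obtain ⟨b, hb, hb'⟩ :=
    hA.exists_not_isSource_not_isSink (not_colorable_two_cycleGraph (by omega) hodd)
  obtain ⟨c, hcb⟩ : ∃ c, A c b := by simpa [IsSource] using hb
  obtain ⟨d, hbd⟩ : ∃ d, A b d := by simpa [IsSink] using hb'
  have hcd : c.val ≠ d.val := fun h => hA.asymm _ _ hcb (Fin.ext h ▸ hbd)
  have hc := (cycleGraph_adj_iff_val (by omega)).mp (hA.adj hcb)
  have hd := (cycleGraph_adj_iff_val (by omega)).mp (hA.adj hbd)
  have := b.isLt
  have := c.isLt
  have := d.isLt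
  refine (mag_le_card_sub_one hA hcb hbd (fun u hu => ?_) (fun hcd' => ?_)
    (fun x hx hx' => ?_)).trans_eq (by rw [Fintype.card_fin])
  · rw [cycleGraph_adj_iff_val (by omega)] at hu
    simp only [Fin.ext_iff]
    omega
  · rw [cycleGraph_adj_iff_val (by omega)] at hcd'
    omega
  · rw [cycleGraph_adj_iff_val (by omega)] at hx hx'
    exact Fin.ext (by omega)

theorem magPlus_cycleGraph_of_odd (hn : 5 ≤ n) (hodd : Odd n) :
    magPlus (cycleGraph n) = n - 1 :=
  magPlus_eq (fun _ hA => mag_le_of_odd hn hodd hA)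
    (isOrientation_oddCycleOrientation (by omega) hodd)
    (card_sub_one_le_mag_oddCycleOrientation (by omega) hodd)

theorem magPlus_cycleGraph_of_even (hn : 2 ≤ n) (heven : Even n) :
    magPlus (cycleGraph n) = n := by
  have col := cycleGraph.bicoloring_of_even n heven
  refine magPlus_eq (fun _ hA => (mag_le_card hA.irrefl).trans_eq (Fintype.card_fin n))
    (isOrientation_bipartiteOrientation col) ?_
  rw [mag_bipartiteOrientation col (exists_adj_cycleGraph hn), Fintype.card_fin]

theorem magPlus_cycleGraph_three : magPlus (cycleGraph 3) = 3 :=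
  magPlus_eq (fun _ hA => (mag_le_card hA.irrefl).trans_eq (Fintype.card_fin 3))
    (isOrientation_oddCycleOrientation le_rfl (by decide)) mag_oddCycleOrientation_three.ge

end MagPlus

/-- values of `mag⁺` and `mag⁻` for cycles:
`mag⁺(C_n) = n - 1` for odd `n ≥ 4`, `mag⁺(C_n) = n` for even `n ≥ 4`,
`mag⁺(C_3) = 3`, and `mag⁻(C_n) = 2` for all `n ≥ 3`. -/
theorem cycle_magPlus_magMinus :
    (∀ n : ℕ, 4 ≤ n → Odd n →
      magPlus (SimpleGraph.cycleGraph n) = n - 1) ∧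
    (∀ n : ℕ, 4 ≤ n → Even n →
      magPlus (SimpleGraph.cycleGraph n) = n) ∧
    magPlus (SimpleGraph.cycleGraph 3) = 3 ∧
    (∀ n : ℕ, 3 ≤ n → magMinus (SimpleGraph.cycleGraph n) = 2) :=
  ⟨fun _ hn hodd => magPlus_cycleGraph_of_odd (by obtain ⟨k, rfl⟩ := hodd; omega) hodd,
    fun _ hn heven => magPlus_cycleGraph_of_even (by omega) heven,
    magPlus_cycleGraph_three,
    fun _ hn => magMinus_cycleGraph hn⟩

end MAG
end
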